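/- Let E be a finite set of vectors in ℝ^d with the partial orthogonality independence model, and suppose M₁ and M₂ are two Markov boundaries of a vector v ∈ E. Then the orthogonal projections of v onto span(M₁) and span(M₂) coincide: proj_{M₁}[v] = proj_{M₂}[v]. -/

import Mathlib

noncomputable def resid {E : Type*} [NormedAddCommGroup E] [InnerProductSpace ℝ E]
    [FiniteDimensional ℝ E] (C : Set E) (v : E) : E :=
  v - (Submodule.orthogonalProjectionOnto (Submodule.span ℝ C) v : E)

/-- `M` is a Markov blanket of `v` in `E` under partial orthogonality:
`M ⊆ E \ {v}` and the residuals of `v` and of every `u ∈ E \ ({v} ∪ M)`, after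
orthogonal projection onto the span of `M`, are orthogonal. -/
def MarkovBlanket {d : ℕ} [DecidableEq (EuclideanSpace ℝ (Fin d))]
    (E : Finset (EuclideanSpace ℝ (Fin d))) (v : EuclideanSpace ℝ (Fin d))
    (M : Finset (EuclideanSpace ℝ (Fin d))) : Prop :=
  M ⊆ E.erase v ∧ ∀ u ∈ E \ insert v M,
    inner ℝ (resid (M : Set (EuclideanSpace ℝ (Fin d))) v)
      (resid (M : Set (EuclideanSpace ℝ (Fin d))) u) = (0 : ℝ)

/-- A Markov boundary is a minimal Markov blanket. -/
def MarkovBoundary {d : ℕ} [DecidableEq (EuclideanSpace ℝ (Fin d))]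
    (E : Finset (EuclideanSpace ℝ (Fin d))) (v : EuclideanSpace ℝ (Fin d))
    (M : Finset (EuclideanSpace ℝ (Fin d))) : Prop :=
  MarkovBlanket E v M ∧ ∀ M' : Finset (EuclideanSpace ℝ (Fin d)),
    MarkovBlanket E v M' → ¬ M' ⊂ M

/-! The projection of `v` onto the span of a Markov blanket `M` is already its projection onto
`span (E \ {v})`: the residual of `v` is orthogonal to `M` by construction, and to every other
`u ∈ E \ {v}` because `⟪resid v, resid u⟫ = ⟪resid v, u⟫`, so it is orthogonal to the larger span.
Hence all Markov boundaries give the same projection. -/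

open Submodule

section Residual

variable {F : Type*} [NormedAddCommGroup F] [InnerProductSpace ℝ F] [FiniteDimensional ℝ F]

lemma resid_eq (C : Set F) (v : F) : resid C v = v - (span ℝ C).starProjection v := rfl

lemma resid_mem_orthogonal (C : Set F) (v : F) : resid C v ∈ (span ℝ C)ᗮ :=
  sub_starProjection_mem_orthogonal v

lemma inner_resid_resid (C : Set F) (v u : F) :
    inner ℝ (resid C v) (resid C u) = inner ℝ (resid C v) u := by
  have hproj : inner ℝ (resid C v) ((span ℝ C).starProjection u) = 0 :=
    (mem_orthogonal' _ _).1 (resid_mem_orthogonal C v) _ (starProjection_apply_mem _ u)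
  rw [resid_eq C u, inner_sub_right, hproj, sub_zero]

lemma resid_mem_orthogonal_span {C D : Set F} {v : F}
    (h : ∀ u ∈ D \ C, inner ℝ (resid C v) u = 0) : resid C v ∈ (span ℝ D)ᗮ := by
  have horth : ∀ u ∈ D, inner ℝ (resid C v) u = 0 := fun u hu => by
    by_cases huC : u ∈ C
    · exact (mem_orthogonal' _ _).1 (resid_mem_orthogonal C v) u (subset_span huC)
    · exact h u ⟨hu, huC⟩
  refine (span_singleton_le_iff_mem _ _).1 (isOrtho_iff_le.1 (isOrtho_span.2 ?_))
  rintro x rfl u hu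
  exact horth u hu

lemma starProjection_span_eq_of_subset {C D : Set F} (hCD : C ⊆ D) {v : F}
    (h : ∀ u ∈ D \ C, inner ℝ (resid C v) u = 0) :
    (span ℝ D).starProjection v = (span ℝ C).starProjection v :=
  eq_starProjection_of_mem_orthogonal (span_mono hCD (starProjection_apply_mem _ v))
    (resid_mem_orthogonal_span h)

end Residual

lemma MarkovBlanket.starProjection_span_erase_eq {d : ℕ}
    [DecidableEq (EuclideanSpace ℝ (Fin d))] {E M : Finset (EuclideanSpace ℝ (Fin d))}
    {v : EuclideanSpace ℝ (Fin d)} (h : MarkovBlanket E v M) :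
    (span ℝ ((E.erase v : Finset _) : Set (EuclideanSpace ℝ (Fin d)))).starProjection v
      = (span ℝ (M : Set (EuclideanSpace ℝ (Fin d)))).starProjection v := by
  refine starProjection_span_eq_of_subset (Finset.coe_subset.2 h.1) fun u hu => ?_
  obtain ⟨⟨huE, huv⟩, huM⟩ : (u ∈ E ∧ u ≠ v) ∧ u ∉ M := by simpa using hu
  rw [← inner_resid_resid]
  exact h.2 u (by simp [huE, huv, huM])

theorem markov_boundaries_same_projection_general {d : ℕ}
    [DecidableEq (EuclideanSpace ℝ (Fin d))]
    (E : Finset (EuclideanSpace ℝ (Fin d))) (v : EuclideanSpace ℝ (Fin d))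
    (M₁ M₂ : Finset (EuclideanSpace ℝ (Fin d)))
    (h₁ : MarkovBoundary E v M₁) (h₂ : MarkovBoundary E v M₂) :
    (Submodule.orthogonalProjectionOnto (Submodule.span ℝ (M₁ : Set (EuclideanSpace ℝ (Fin d)))) v
      : EuclideanSpace ℝ (Fin d))
    = (Submodule.orthogonalProjectionOnto (Submodule.span ℝ (M₂ : Set (EuclideanSpace ℝ (Fin d)))) v
      : EuclideanSpace ℝ (Fin d)) :=
  h₁.1.starProjection_span_erase_eq.symm.trans h₂.1.starProjection_span_erase_eq

/-- Any two Markov boundaries of a vector under partial orthogonality give the same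
orthogonal projection of that vector. -/
theorem markov_boundaries_same_projection {d : ℕ}
    [DecidableEq (EuclideanSpace ℝ (Fin d))]
    (E : Finset (EuclideanSpace ℝ (Fin d))) (v : EuclideanSpace ℝ (Fin d)) (hv : v ∈ E)
    (M₁ M₂ : Finset (EuclideanSpace ℝ (Fin d)))
    (h₁ : MarkovBoundary E v M₁) (h₂ : MarkovBoundary E v M₂) :
    (Submodule.orthogonalProjectionOnto (Submodule.span ℝ (M₁ : Set (EuclideanSpace ℝ (Fin d)))) v
      : EuclideanSpace ℝ (Fin d))
    = (Submodule.orthogonalProjectionOnto (Submodule.span ℝ (M₂ : Set (EuclideanSpace ℝ (Fin d)))) v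
      : EuclideanSpace ℝ (Fin d)) :=
  markov_boundaries_same_projection_general E v M₁ M₂ h₁ h₂
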